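/- arXiv:2406.13486 — 2 statements merged into one kernel-verified Lean document; each statement's English description precedes it below -/
import Mathlib

section
/- Let x_1, x_2, … be a sequence in 𝓜 whose empirical distributions P_n converge weakly to a limiting distribution P_∞ whose covariance matrix Σ^{P_∞} is positive definite. Fix α > 0 and let (b_n^α) be the strategy with b_n^α = (1/m,…,1/m) for n ≤ h and b_n^α ∈ B(α, P_{n−1}) for n > h. Then the empirical Sharpe ratio converges: lim_{n→∞} Sh_n(b_n^α) = E^{P_∞}(⟨b^α, X⟩) / sqrt( Var^{P_∞}(⟨b^α, X⟩) ), where b^α is the unique element of B(α, P_∞). -/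
open MeasureTheory Filter Topology Finset

noncomputable section

/-- The ambient Euclidean space of asset-return vectors. -/
abbrev Em (m : ℕ) := EuclideanSpace ℝ (Fin m)

/-- The market set `𝓜 = {β ∈ ℝ^m : β_j > 0 ∀ j, ‖β‖ ≤ M}`. -/
def mkt (m : ℕ) (M : ℝ) : Set (Em m) := {β | (∀ j, 0 < β j) ∧ ‖β‖ ≤ M}

/-- The portfolio simplex `𝓑 = {β ∈ ℝ^m : β_j ≥ 0 ∀ j, Σ_j β_j = 1}`. -/
def splx (m : ℕ) : Set (Em m) := {β | (∀ j, 0 ≤ β j) ∧ ∑ j, β j = 1}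

/-- Mean vector `μ^Q` of a distribution `Q`. -/
def meanVec {m : ℕ} (Q : Measure (Em m)) : Fin m → ℝ := fun j => ∫ x, x j ∂Q

/-- Covariance matrix `Σ^Q` of a distribution `Q`. -/
def covMat {m : ℕ} (Q : Measure (Em m)) : Matrix (Fin m) (Fin m) ℝ :=
  Matrix.of fun i j => ∫ x, (x i - meanVec Q i) * (x j - meanVec Q j) ∂Q

/-- Mean-variance utility `L(α,b,μ^Q,Σ^Q) = ⟨b,μ^Q⟩ - α ⟨b, Σ^Q b⟩`. -/
def mvU {m : ℕ} (α : ℝ) (b : Em m) (Q : Measure (Em m)) : ℝ :=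
  (∑ j, b j * meanVec Q j) - α * ∑ i, ∑ j, b i * covMat Q i j * b j

/-- The set `B(α,Q)` of maximizers of the M-V utility over the simplex. -/
def mvArgmax {m : ℕ} (α : ℝ) (Q : Measure (Em m)) : Set (Em m) :=
  {b ∈ splx m | ∀ b' ∈ splx m, mvU α b' Q ≤ mvU α b Q}


/-- The return `⟨b,x⟩` of a portfolio `b` against a return vector `x`. -/
def ret {m : ℕ} (b x : Em m) : ℝ := ∑ j, b j * x j

/-- Empirical mean of returns `M_n((b_n)) = (1/n) Σ_{i=1}^n ⟨b_i,x_i⟩` of a strategy. -/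
def empMean {m : ℕ} (b x : ℕ → Em m) (n : ℕ) : ℝ :=
  (n : ℝ)⁻¹ * ∑ i ∈ Finset.Icc 1 n, ret (b i) (x i)

/-- Empirical variance of returns `V_n((b_n))` of a strategy. -/
def empVar {m : ℕ} (b x : ℕ → Em m) (n : ℕ) : ℝ :=
  (n : ℝ)⁻¹ * ∑ j ∈ Finset.Icc 1 n, (ret (b j) (x j) - empMean b x n) ^ 2

/-- Empirical growth rate `W_n((b_n)) = (1/n) Σ_{i=1}^n log ⟨b_i,x_i⟩` of a strategy. -/
def empGrowth {m : ℕ} (b x : ℕ → Em m) (n : ℕ) : ℝ :=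
  (n : ℝ)⁻¹ * ∑ i ∈ Finset.Icc 1 n, Real.log (ret (b i) (x i))

/-- Empirical Sharpe ratio (reference return `r = 0`). -/
def empSharpe {m : ℕ} (b x : ℕ → Em m) (n : ℕ) : ℝ :=
  empMean b x n / Real.sqrt (empVar b x n)

open scoped ENNReal

/-- Weak convergence of a sequence of measures: integrals of every bounded continuous
real function converge. -/
def WeakConv {m : ℕ} (Qn : ℕ → Measure (Em m)) (Q : Measure (Em m)) : Prop :=
  ∀ f : BoundedContinuousFunction (Em m) ℝ,
    Tendsto (fun n => ∫ x, f x ∂(Qn n)) atTop (𝓝 (∫ x, f x ∂Q))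

/-- The empirical distribution `P_n = (1/n) Σ_{i=1}^n δ_{x_i}`. -/
def empMeas {m : ℕ} (x : ℕ → Em m) (n : ℕ) : Measure (Em m) :=
  (n : ℝ≥0∞)⁻¹ • ∑ i ∈ Finset.Icc 1 n, Measure.dirac (x i)

/-- Expected return `E^Q(⟨b,X⟩)` of a portfolio under a distribution `Q`. -/
def pMean {m : ℕ} (Q : Measure (Em m)) (b : Em m) : ℝ := ∫ x, ret b x ∂Q

/-- Variance `Var^Q(⟨b,X⟩)` of a portfolio's return under a distribution `Q`. -/
def pVar {m : ℕ} (Q : Measure (Em m)) (b : Em m) : ℝ := ∫ x, (ret b x - pMean Q b) ^ 2 ∂Q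

/-- Expected logarithmic return `E^Q(log ⟨b,X⟩)` of a portfolio under `Q`. -/
def pLog {m : ℕ} (Q : Measure (Em m)) (b : Em m) : ℝ := ∫ x, Real.log (ret b x) ∂Q

/-! The Sharpe ratio is a continuous function of the first two empirical moments of the realised
returns, so it suffices that these converge. All the mass of every `P_n` and of `P_∞` lies in a
fixed compact ball, so weak convergence gives `(μ^{P_n}, Σ^{P_n}) → (μ^{P_∞}, Σ^{P_∞})`. The M-V
utility is jointly continuous in these parameters and the portfolio, and the simplex is compact,
so the maximisers `b_n` converge to the unique maximiser `b^α` (Berge's argument). Uniform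
continuity on compact sets then allows replacing `b_i` by `b^α` in the Cesàro averages of
`⟨b_i, x_i⟩` and `⟨b_i, x_i⟩²`, whose limits are the moments of `⟨b^α, X⟩` under `P_∞`. Finally the
limiting variance is `b^αᵀ Σ^{P_∞} b^α > 0`, so the quotient passes to the limit. -/

open ProbabilityTheory Matrix

def avgIcc (u : ℕ → ℝ) (n : ℕ) : ℝ := (n : ℝ)⁻¹ * ∑ i ∈ Finset.Icc 1 n, u i

theorem tendsto_avgIcc {u : ℕ → ℝ} {l : ℝ} (hu : Tendsto u atTop (𝓝 l)) :
    Tendsto (avgIcc u) atTop (𝓝 l) := by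
  have hshift : ∀ n, avgIcc u n = (n : ℝ)⁻¹ * ∑ i ∈ range n, u (i + 1) := fun n => by
    rw [avgIcc, ← Finset.Ico_add_one_right_eq_Icc, Finset.sum_Ico_eq_sum_range]
    simp [add_comm]
  rw [funext hshift]
  exact ((tendsto_add_atTop_iff_nat 1).2 hu).cesaro

lemma avgIcc_add (u v : ℕ → ℝ) (n : ℕ) :
    avgIcc (fun i => u i + v i) n = avgIcc u n + avgIcc v n := by
  simp only [avgIcc, sum_add_distrib, mul_add]

lemma avgIcc_sub_avgIcc_sq (u : ℕ → ℝ) (n : ℕ) :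
    avgIcc (fun i => (u i - avgIcc u n) ^ 2) n = avgIcc (fun i => u i ^ 2) n - avgIcc u n ^ 2 := by
  rcases Nat.eq_zero_or_pos n with rfl | hn
  · simp [avgIcc]
  have hn' : (n : ℝ) ≠ 0 := by positivity
  simp only [avgIcc, sub_sq, sum_add_distrib, sum_sub_distrib, ← sum_mul, ← mul_sum, sum_const,
    Nat.card_Icc, add_tsub_cancel_right, nsmul_eq_mul]
  field_simp
  ring

theorem tendsto_sub_of_tendsto_of_mem_isCompact {X Y : Type*} [PseudoMetricSpace X]
    [PseudoMetricSpace Y] {G : X × Y → ℝ} (hG : Continuous G) {K : Set Y} (hK : IsCompact K)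
    {b : ℕ → X} {b₀ : X} (hb : Tendsto b atTop (𝓝 b₀)) {x : ℕ → Y} (hx : ∀ n, x n ∈ K) :
    Tendsto (fun n => G (b n, x n) - G (b₀, x n)) atTop (𝓝 0) := by
  have hGu := Metric.uniformContinuousOn_iff.1 <|
    (hb.isCompact_insert_range.prod hK).uniformContinuousOn_of_continuous hG.continuousOn
  refine Metric.tendsto_atTop.2 fun ε hε => ?_
  obtain ⟨δ, hδ, hGδ⟩ := hGu ε hε
  obtain ⟨N, hN⟩ := Metric.tendsto_atTop.1 hb δ hδ
  refine ⟨N, fun n hn => ?_⟩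
  rw [dist_zero_right, Real.norm_eq_abs, ← Real.dist_eq]
  exact hGδ _ ⟨Set.mem_insert_of_mem _ (Set.mem_range_self n), hx n⟩ _ ⟨Set.mem_insert _ _, hx n⟩
    (by simpa [Prod.dist_eq] using hN n hn)

theorem tendsto_of_isMaxOn_of_unique {Θ X : Type*} [TopologicalSpace Θ] [TopologicalSpace X]
    [FirstCountableTopology X] {F : Θ → X → ℝ} (hF : Continuous (Function.uncurry F))
    {K : Set X} (hK : IsCompact K) {θ : ℕ → Θ} {θ₀ : Θ} (hθ : Tendsto θ atTop (𝓝 θ₀))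
    {c : ℕ → X} (hc : ∀ n, c n ∈ K ∧ IsMaxOn (F (θ n)) K (c n)) {c₀ : X}
    (huniq : ∀ z ∈ K, IsMaxOn (F θ₀) K z → z = c₀) : Tendsto c atTop (𝓝 c₀) := by
  refine tendsto_of_subseq_tendsto fun ns hns => ?_
  obtain ⟨z, hzK, φ, hφ, hcz⟩ := hK.tendsto_subseq fun n => (hc (ns n)).1
  have hθφ : Tendsto (fun n => θ (ns (φ n))) atTop (𝓝 θ₀) :=
    hθ.comp (hns.comp hφ.tendsto_atTop)
  have hmax : IsMaxOn (F θ₀) K z := fun w hw =>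
    le_of_tendsto_of_tendsto' ((hF.tendsto _).comp (hθφ.prodMk_nhds tendsto_const_nhds))
      ((hF.tendsto _).comp (hθφ.prodMk_nhds hcz)) fun n => (hc (ns (φ n))).2 hw
  exact ⟨φ, huniq z hzK hmax ▸ hcz⟩

lemma Continuous.memLp_of_isCompact {X : Type*} [TopologicalSpace X] [MeasurableSpace X]
    [OpensMeasurableSpace X] {Q : Measure X} [IsFiniteMeasure Q] {K : Set X} (hK : IsCompact K)
    (hQ : Q Kᶜ = 0) {f : X → ℝ} (hf : Continuous f) (p : ℝ≥0∞) : MemLp f p Q := by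
  obtain ⟨C, hC⟩ := hK.exists_bound_of_continuousOn hf.continuousOn
  exact MemLp.of_bound hf.aestronglyMeasurable C <| Filter.mem_of_superset (mem_ae_iff.2 hQ) hC

section Portfolio

variable {m : ℕ}

lemma isCompact_splx (m : ℕ) : IsCompact (splx m) := by
  have : splx m = WithLp.ofLp ⁻¹' stdSimplex ℝ (Fin m) := by
    ext b; simp [splx, stdSimplex]
  rw [this]
  exact (EuclideanSpace.equiv (Fin m) ℝ).toHomeomorph.isCompact_preimage.2
    (isCompact_stdSimplex _ _)

lemma ofLp_ne_zero_of_mem_splx {b : Em m} (hb : b ∈ splx m) : WithLp.ofLp b ≠ 0 := by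
  intro h0
  simpa [h0] using hb.2

lemma continuous_ret : Continuous fun p : Em m × Em m => ret p.1 p.2 := by
  unfold ret; fun_prop

lemma continuous_ret_right (b : Em m) : Continuous fun y => ret b y := by
  unfold ret; fun_prop

lemma pVar_eq_variance (Q : Measure (Em m)) (b : Em m) : pVar Q b = Var[fun y => ret b y; Q] :=
  (variance_eq_integral (continuous_ret_right b).aemeasurable).symm

lemma variance_ret_eq_dotProduct {Q : Measure (Em m)} [IsProbabilityMeasure Q]
    (hQ : ∀ j, MemLp (fun y : Em m => y j) 2 Q) (b : Em m) :
    Var[fun y => ret b y; Q] = b ⬝ᵥ covMat Q *ᵥ b := by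
  rw [← covariance_self (continuous_ret_right b).aemeasurable]
  simp only [ret]
  rw [covariance_fun_sum_fun_sum (fun j => (hQ j).const_mul (b j))
    (fun j => (hQ j).const_mul (b j))]
  simp only [covariance_const_mul_left, covariance_const_mul_right, dotProduct, Matrix.mulVec,
    mul_sum]
  refine sum_congr rfl fun i _ => sum_congr rfl fun j _ => ?_
  simp only [covMat, covariance, meanVec, Matrix.of_apply]
  ring

lemma covMat_apply_eq_sub {Q : Measure (Em m)} [IsProbabilityMeasure Q] {K : Set (Em m)}
    (hK : IsCompact K) (hQ : Q Kᶜ = 0) (i j : Fin m) :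
    covMat Q i j = ∫ y, y i * y j ∂Q - meanVec Q i * meanVec Q j :=
  covariance_eq_sub ((by fun_prop : Continuous fun y : Em m => y i).memLp_of_isCompact hK hQ 2)
    ((by fun_prop : Continuous fun y : Em m => y j).memLp_of_isCompact hK hQ 2)

-- `mvU α b Q` unfolds to `mvL α (meanVec Q, covMat Q) b`, the paper's `L(α, b, μ^Q, Σ^Q)`.
def mvL (α : ℝ) (p : (Fin m → ℝ) × Matrix (Fin m) (Fin m) ℝ) (b : Em m) : ℝ :=
  ∑ j, b j * p.1 j - α * ∑ i, ∑ j, b i * p.2 i j * b j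

lemma continuous_mvL (α : ℝ) : Continuous (Function.uncurry (mvL (m := m) α)) := by
  unfold mvL Function.uncurry; fun_prop

lemma tendsto_of_mem_mvArgmax {α : ℝ} {Q : ℕ → Measure (Em m)} {P : Measure (Em m)}
    (hQ : Tendsto (fun n => (meanVec (Q n), covMat (Q n))) atTop (𝓝 (meanVec P, covMat P)))
    {b : ℕ → Em m} (hb : ∀ n, b n ∈ mvArgmax α (Q n)) {bα : Em m}
    (hbα : mvArgmax α P = {bα}) : Tendsto b atTop (𝓝 bα) :=
  tendsto_of_isMaxOn_of_unique (continuous_mvL α) (isCompact_splx m) hQ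
    (fun n => ⟨(hb n).1, fun c hc => (hb n).2 c hc⟩)
    fun _ hz hmax => hbα.subset ⟨hz, fun _ hc => hmax hc⟩

end Portfolio

section Empirical

variable {m : ℕ}

lemma integral_empMeas (x : ℕ → Em m) {f : Em m → ℝ} (hf : Continuous f) (n : ℕ) :
    ∫ y, f y ∂(empMeas x n) = avgIcc (fun i => f (x i)) n := by
  rw [empMeas, integral_smul_measure,
    integral_finsetSum_measure fun i _ => integrable_dirac' hf.stronglyMeasurable enorm_lt_top]
  simp [avgIcc, integral_dirac]

lemma isProbabilityMeasure_empMeas (x : ℕ → Em m) {n : ℕ} (hn : 0 < n) :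
    IsProbabilityMeasure (empMeas x n) := by
  constructor
  simp [empMeas, Measure.finsetSum_apply]
  exact ENNReal.inv_mul_cancel (by exact_mod_cast hn.ne') (ENNReal.natCast_ne_top n)

lemma empMeas_compl_eq_zero {x : ℕ → Em m} {K : Set (Em m)} (hK : MeasurableSet K)
    (hx : ∀ i, x i ∈ K) (n : ℕ) : empMeas x n Kᶜ = 0 := by
  simp [empMeas, Measure.finsetSum_apply, Measure.dirac_apply' _ hK.compl, hx]

lemma empVar_eq_avgIcc_sub (b x : ℕ → Em m) (n : ℕ) :
    empVar b x n = avgIcc (fun i => ret (b i) (x i) ^ 2) n - empMean b x n ^ 2 :=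
  avgIcc_sub_avgIcc_sq _ n

lemma WeakConv.tendsto_integral {Qn : ℕ → Measure (Em m)} {Q : Measure (Em m)}
    (hconv : WeakConv Qn Q) {K : Set (Em m)} (hK : IsCompact K) (hQn : ∀ n, Qn n Kᶜ = 0)
    (hQ : Q Kᶜ = 0) {f : Em m → ℝ} (hf : Continuous f) :
    Tendsto (fun n => ∫ y, f y ∂(Qn n)) atTop (𝓝 (∫ y, f y ∂Q)) := by
  have := isCompact_iff_compactSpace.1 hK
  obtain ⟨g, -, hg⟩ := BoundedContinuousFunction.exists_norm_eq_domRestrict_eq_of_closed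
    (BoundedContinuousFunction.mkOfCompact ((ContinuousMap.mk f hf).restrict K)) hK.isClosed
  have hgf : ∀ {μ : Measure (Em m)}, μ Kᶜ = 0 → ∫ y, f y ∂μ = ∫ y, g y ∂μ := fun hμ =>
    integral_congr_ae <| Set.EqOn.aeEq (fun y hy => (DFunLike.congr_fun hg ⟨y, hy⟩).symm) hμ
  simp only [hgf (hQn _), hgf hQ]
  exact hconv g

lemma tendsto_meanVec_covMat_empMeas {x : ℕ → Em m} {P : Measure (Em m)} [IsProbabilityMeasure P]
    {K : Set (Em m)} (hK : IsCompact K) (hx : ∀ i, x i ∈ K) (hP : P Kᶜ = 0)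
    (hconv : WeakConv (empMeas x) P) :
    Tendsto (fun n => (meanVec (empMeas x n), covMat (empMeas x n))) atTop
      (𝓝 (meanVec P, covMat P)) := by
  have hint {f : Em m → ℝ} (hf : Continuous f) :=
    hconv.tendsto_integral hK (empMeas_compl_eq_zero hK.measurableSet hx) hP hf
  have hmean : Tendsto (fun n => meanVec (empMeas x n)) atTop (𝓝 (meanVec P)) :=
    tendsto_pi_nhds.2 fun j => hint (by fun_prop)
  refine hmean.prodMk_nhds (tendsto_pi_nhds.2 fun i => tendsto_pi_nhds.2 fun j => ?_)
  rw [covMat_apply_eq_sub hK hP]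
  refine ((hint (by fun_prop)).sub
    ((tendsto_pi_nhds.1 hmean i).mul (tendsto_pi_nhds.1 hmean j))).congr' ?_
  filter_upwards [eventually_gt_atTop 0] with n hn
  have := isProbabilityMeasure_empMeas x hn
  exact (covMat_apply_eq_sub hK (empMeas_compl_eq_zero hK.measurableSet hx n) i j).symm

lemma tendsto_avgIcc_of_weakConv {x : ℕ → Em m} {P : Measure (Em m)} {K : Set (Em m)}
    (hK : IsCompact K) (hx : ∀ i, x i ∈ K) (hP : P Kᶜ = 0) (hconv : WeakConv (empMeas x) P)
    {G : Em m × Em m → ℝ} (hG : Continuous G) {b : ℕ → Em m} {b₀ : Em m}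
    (hb : Tendsto b atTop (𝓝 b₀)) :
    Tendsto (avgIcc fun i => G (b i, x i)) atTop (𝓝 (∫ y, G (b₀, y) ∂P)) := by
  have hG₀ : Continuous fun y => G (b₀, y) := hG.comp (Continuous.prodMk_right b₀)
  have hlim := (hconv.tendsto_integral hK (empMeas_compl_eq_zero hK.measurableSet hx) hP hG₀).add
    (tendsto_avgIcc (tendsto_sub_of_tendsto_of_mem_isCompact hG hK hb hx))
  simpa only [integral_empMeas x hG₀, ← avgIcc_add, add_sub_cancel, add_zero] using hlim

end Empirical
theorem empSharpe_tendsto_limit_sharpe_general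
    (m : ℕ) (M : ℝ)
    (x : ℕ → Em m) (hx : ∀ n, x n ∈ mkt m M)
    (Plim : Measure (Em m)) [IsProbabilityMeasure Plim] (hPsupp : Plim (mkt m M)ᶜ = 0)
    (hconv : WeakConv (empMeas x) Plim) (hPD : (covMat Plim).PosDef)
    (α : ℝ) (h : ℕ)
    (b : ℕ → Em m)
    (hb2 : ∀ n > h, b n ∈ mvArgmax α (empMeas x (n - 1)))
    (bα : Em m) (hbα : mvArgmax α Plim = {bα}) :
    Tendsto (fun n => empSharpe b x n) atTop
      (𝓝 (pMean Plim bα / Real.sqrt (pVar Plim bα))) := by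
  have hK : IsCompact (Metric.closedBall (0 : Em m) M) := isCompact_closedBall 0 M
  have hxK (n : ℕ) : x n ∈ Metric.closedBall 0 M := mem_closedBall_zero_iff.2 (hx n).2
  have hPK : Plim (Metric.closedBall 0 M)ᶜ = 0 :=
    measure_mono_null (Set.compl_subset_compl.2 fun y hy => mem_closedBall_zero_iff.2 hy.2) hPsupp
  have hb : Tendsto b atTop (𝓝 bα) := by
    refine (tendsto_add_atTop_iff_nat (h + 1)).1 <| tendsto_of_mem_mvArgmax
      ((tendsto_meanVec_covMat_empMeas hK hxK hPK hconv).comp (tendsto_add_atTop_nat h))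
      (fun n => ?_) hbα
    simpa [Nat.add_sub_cancel] using hb2 (n + (h + 1)) (by omega)
  have hmean : Tendsto (empMean b x) atTop (𝓝 (pMean Plim bα)) :=
    tendsto_avgIcc_of_weakConv hK hxK hPK hconv continuous_ret hb
  have hsq : Tendsto (avgIcc fun i => ret (b i) (x i) ^ 2) atTop (𝓝 (∫ y, ret bα y ^ 2 ∂Plim)) :=
    tendsto_avgIcc_of_weakConv hK hxK hPK hconv (continuous_ret.pow 2) hb
  have hvar : Tendsto (empVar b x) atTop (𝓝 (pVar Plim bα)) := by
    rw [funext (empVar_eq_avgIcc_sub b x), pVar_eq_variance,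
      variance_eq_sub ((continuous_ret_right bα).memLp_of_isCompact hK hPK 2)]
    exact hsq.sub (hmean.pow 2)
  have hpos : 0 < pVar Plim bα := by
    rw [pVar_eq_variance, variance_ret_eq_dotProduct fun j =>
      (by fun_prop : Continuous fun y : Em m => y j).memLp_of_isCompact hK hPK 2]
    exact hPD.dotProduct_mulVec_pos (ofLp_ne_zero_of_mem_splx (hbα.ge rfl).1)
  exact hmean.div hvar.sqrt (Real.sqrt_pos.2 hpos).ne'

/-- Under the assumptions of Statement 6, the empirical Sharpe ratio of the
online M-V strategy converges to the Sharpe ratio of the unique `b^α ∈ B(α,P_∞)` under the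
limiting distribution. -/
theorem empSharpe_tendsto_limit_sharpe
    (m : ℕ) (hm : 2 ≤ m) (M : ℝ) (hM : 0 < M)
    (x : ℕ → Em m) (hx : ∀ n, x n ∈ mkt m M)
    (Plim : Measure (Em m)) [IsProbabilityMeasure Plim] (hPsupp : Plim (mkt m M)ᶜ = 0)
    (hconv : WeakConv (empMeas x) Plim) (hPD : (covMat Plim).PosDef)
    (α : ℝ) (hα : 0 < α) (h : ℕ) (hh : 0 < h)
    (b : ℕ → Em m)
    (hb1 : ∀ n ≤ h, ∀ j, b n j = (m : ℝ)⁻¹)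
    (hb2 : ∀ n > h, b n ∈ mvArgmax α (empMeas x (n - 1)))
    (bα : Em m) (hbα : mvArgmax α Plim = {bα}) :
    Tendsto (fun n => empSharpe b x n) atTop
      (𝓝 (pMean Plim bα / Real.sqrt (pVar Plim bα))) :=
  empSharpe_tendsto_limit_sharpe_general m M x hx Plim hPsupp hconv hPD α h b hb2 bα hbα
end
end

section
/- Let {X_n}_{n≥1} be a stationary process of 𝓜-valued random vectors extended to a two-sided stationary process, with invariant σ-field 𝓘. If the regular conditional distribution ℙ(X_1 ∈ · | σ(X_{−∞}^0)) has almost surely positive definite covariance matrix (equivalently, almost surely full-dimensional support), then the conditional distribution P_∞ := ℙ(X_1 ∈ · | 𝓘) also has almost surely positive definite covariance matrix. -/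
open MeasureTheory Filter Topology Finset

noncomputable section

open ProbabilityTheory

/-- The invariant σ-field `𝓘 = {F : T⁻¹F = F}` of a transformation `T`. -/
def invSigma {Ω : Type*} [MeasurableSpace Ω] (T : Ω → Ω) : MeasurableSpace Ω where
  MeasurableSet' s := MeasurableSet s ∧ T ⁻¹' s = s
  measurableSet_empty := ⟨MeasurableSet.empty, rfl⟩
  measurableSet_compl := fun s hs => ⟨hs.1.compl, by rw [Set.preimage_compl, hs.2]⟩
  measurableSet_iUnion := fun f hf =>
    ⟨MeasurableSet.iUnion fun i => (hf i).1, by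
      rw [Set.preimage_iUnion]; exact Set.iUnion_congr fun i => (hf i).2⟩

/-- The σ-field `σ(X_{−∞}^0)` generated by the coordinates with indices `≤ 0` of a
two-sided process. -/
def sigmaPast {Ω : Type*} [MeasurableSpace Ω] {m : ℕ} (X : ℤ → Ω → Em m) :
    MeasurableSpace Ω :=
  ⨆ (k : ℤ) (_ : k ≤ 0), MeasurableSpace.comap (X k) inferInstance

/-- The σ-field `σ(X_1^{n−1})` generated by `X_1, …, X_{n−1}`. -/
def sigmaUpTo {Ω : Type*} [MeasurableSpace Ω] {m : ℕ} (X : ℤ → Ω → Em m) (n : ℕ) :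
    MeasurableSpace Ω :=
  ⨆ (k : ℤ) (_ : 1 ≤ k) (_ : k ≤ (n : ℤ) - 1), MeasurableSpace.comap (X k) inferInstance

/-!
For a.e. `ω`, the law of `X 1` under `condExpKernel P (invSigma T) ω` is the mixture, over
`η ∼ condExpKernel P (invSigma T) ω`, of its laws under `condExpKernel P (sigmaPast X) η`, and a
property of `P`-a.e. `η` holds `condExpKernel P (invSigma T) ω`-a.e. for `P`-a.e. `ω`. A mixture
of laws with positive definite covariance has positive definite covariance: if `⟨v, x⟩` were
a.s. constant under the mixture, it would be a.s. constant under almost every component.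

The mixture identity is the tower property `E[E[Y | past] | 𝓘] = E[Y | 𝓘]` for `Y = 1_B(X 1)`.
Since `𝓘` need not lie inside the past σ-algebra (`Ω` may carry more than the process), it is
proved directly: with `S = Tinv`, the shifts `D ∘ S^[k]` of `D = Y - E[Y | past]` are pairwise
orthogonal, so `‖∑_{k<n} D ∘ S^[k]‖₂² = n ‖D‖₂²`, while on an `S`-invariant set `A` the integral
of that sum is `n ∫_A D`. Cauchy–Schwarz gives `n² (∫_A D)² ≤ n ‖D‖₂²` for all `n`, so
`∫_A D = 0`.
-/

section Orthogonal

variable {Ω : Type*} {mΩ : MeasurableSpace Ω} {μ : Measure Ω} {S : Ω → Ω}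

lemma sq_integral_le_integral_sq [IsProbabilityMeasure μ] {f : Ω → ℝ} (hf : MemLp f 2 μ) :
    (∫ ω, f ω ∂μ) ^ 2 ≤ ∫ ω, f ω ^ 2 ∂μ := by
  simpa [variance_eq_sub hf] using variance_nonneg f μ

lemma MeasureTheory.MeasurePreserving.integral_comp_of_aestronglyMeasurable {ν : Measure Ω}
    (hS : MeasurePreserving S μ ν) {f : Ω → ℝ} (hf : AEStronglyMeasurable f ν) :
    ∫ ω, f (S ω) ∂μ = ∫ ω, f ω ∂ν := by
  rw [← integral_map hS.aemeasurable (by rwa [hS.map_eq]), hS.map_eq]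

lemma memLp_birkhoffSum (hS : MeasurePreserving S μ μ) {D : Ω → ℝ} (hD : MemLp D 2 μ) (n : ℕ) :
    MemLp (birkhoffSum S D n) 2 μ :=
  memLp_finsetSum _ fun k _ => hD.comp_measurePreserving (hS.iterate k)

lemma integral_sq_birkhoffSum (hS : MeasurePreserving S μ μ)
    {D : Ω → ℝ} (hD : MemLp D 2 μ) (horth : ∀ j, 0 < j → ∫ ω, D ω * D (S^[j] ω) ∂μ = 0)
    (n : ℕ) : ∫ ω, birkhoffSum S D n ω ^ 2 ∂μ = n * ∫ ω, D ω ^ 2 ∂μ := by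
  induction n with
  | zero => simp [birkhoffSum]
  | succ n ih =>
    set B := birkhoffSum S D n
    have hB : MemLp (fun ω => B (S ω)) 2 μ :=
      (memLp_birkhoffSum hS hD n).comp_measurePreserving hS
    have hcross : ∫ ω, 2 * D ω * B (S ω) ∂μ = 0 := by
      simp_rw [B, birkhoffSum, mul_assoc, Finset.mul_sum, ← Function.iterate_succ_apply]
      refine (integral_finsetSum _ fun k _ => ?_).trans (Finset.sum_eq_zero fun k _ => ?_)
      · exact (hD.integrable_mul (hD.comp_measurePreserving (hS.iterate (k + 1)))).const_mul 2
      · rw [integral_const_mul, horth (k + 1) k.succ_pos, mul_zero]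
    have hshift : ∫ ω, B (S ω) ^ 2 ∂μ = ∫ ω, B ω ^ 2 ∂μ :=
      hS.integral_comp_of_aestronglyMeasurable
        (memLp_birkhoffSum hS hD n).integrable_sq.aestronglyMeasurable
    have hexpand : ∀ ω, birkhoffSum S D (n + 1) ω ^ 2
        = (D ω ^ 2 + 2 * D ω * B (S ω)) + B (S ω) ^ 2 := fun ω => by
      rw [birkhoffSum_succ']; ring
    have hDB : Integrable (fun ω => 2 * D ω * B (S ω)) μ := by
      simpa [mul_assoc] using (hD.integrable_mul hB).const_mul 2
    simp_rw [hexpand]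
    rw [integral_add (f := fun ω => D ω ^ 2 + 2 * D ω * B (S ω)) (hD.integrable_sq.add hDB)
        hB.integrable_sq,
      integral_add hD.integrable_sq hDB, hcross, hshift, ih]
    push_cast; ring

lemma setIntegral_birkhoffSum (hS : MeasurePreserving S μ μ) {D : Ω → ℝ} (hD : Integrable D μ)
    {A : Set Ω} (hA : MeasurableSet A) (hSA : S ⁻¹' A = A) (n : ℕ) :
    ∫ ω in A, birkhoffSum S D n ω ∂μ = n * ∫ ω in A, D ω ∂μ := by
  have hSA' : MeasurePreserving S (μ.restrict A) (μ.restrict A) := by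
    simpa [hSA] using hS.restrict_preimage hA
  induction n with
  | zero => simp [birkhoffSum]
  | succ n ih =>
    have hB : Integrable (birkhoffSum S D n) μ :=
      integrable_finsetSum _ fun k _ => (hS.iterate k).integrable_comp_of_integrable hD
    simp_rw [birkhoffSum_succ']
    rw [integral_add (g := fun ω => birkhoffSum S D n (S ω)) hD.integrableOn
        (hS.integrable_comp_of_integrable hB).integrableOn,
      hSA'.integral_comp_of_aestronglyMeasurable hB.integrableOn.aestronglyMeasurable, ih]
    push_cast; ring

theorem setIntegral_eq_zero_of_integral_mul_iterate_eq_zero [IsProbabilityMeasure μ]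
    (hS : MeasurePreserving S μ μ) {D : Ω → ℝ} (hD : MemLp D 2 μ)
    (horth : ∀ j, 0 < j → ∫ ω, D ω * D (S^[j] ω) ∂μ = 0)
    {A : Set Ω} (hA : MeasurableSet A) (hSA : S ⁻¹' A = A) :
    ∫ ω in A, D ω ∂μ = 0 := by
  have hbound : ∀ n : ℕ, (n * ∫ ω in A, D ω ∂μ) ^ 2 ≤ n * ∫ ω, D ω ^ 2 ∂μ := fun n => by
    rw [← setIntegral_birkhoffSum hS (hD.integrable one_le_two) hA hSA n,
      ← integral_sq_birkhoffSum hS hD horth n, ← integral_indicator hA]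
    have hB := memLp_birkhoffSum hS hD n
    refine (sq_integral_le_integral_sq (hB.indicator hA)).trans
      (integral_mono (hB.indicator hA).integrable_sq hB.integrable_sq fun ω => ?_)
    by_cases hω : ω ∈ A <;> simp [hω, sq_nonneg]
  by_contra ha
  have ha2 : 0 < (∫ ω in A, D ω ∂μ) ^ 2 := by positivity
  obtain ⟨n, hn⟩ := exists_nat_gt ((∫ ω, D ω ^ 2 ∂μ) / (∫ ω in A, D ω ∂μ) ^ 2)
  rw [div_lt_iff₀ ha2] at hn
  have hB : 0 ≤ ∫ ω, D ω ^ 2 ∂μ := integral_nonneg fun ω => sq_nonneg (D ω)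
  nlinarith [hbound n, (Nat.cast_nonneg n : (0 : ℝ) ≤ n)]

end Orthogonal

section Tower

variable {Ω : Type*} {F I : MeasurableSpace Ω} [mΩ : MeasurableSpace Ω] {μ : Measure Ω}
  [IsProbabilityMeasure μ] {S : Ω → Ω}

lemma integral_mul_eq_zero_of_condExp_eq_zero (hF : F ≤ mΩ) {W D : Ω → ℝ}
    (hW : StronglyMeasurable[F] W) (hWD : Integrable (W * D) μ) (hD : Integrable D μ)
    (hDF : μ[D|F] =ᵐ[μ] 0) : ∫ ω, W ω * D ω ∂μ = 0 := by
  rw [← integral_condExp hF]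
  change ∫ ω, μ[W * D|F] ω ∂μ = 0
  rw [integral_congr_ae (condExp_mul_of_stronglyMeasurable_left hW hWD hD)]
  refine integral_eq_zero_of_ae ?_
  filter_upwards [hDF] with ω hω
  simp [hω]

theorem setIntegral_condExp_of_shift_invariant (hF : F ≤ mΩ) (hS : MeasurePreserving S μ μ)
    (hSF : F.comap S ≤ F) {Y : Ω → ℝ} (hY : MemLp Y 2 μ) (hYS : StronglyMeasurable[F] (Y ∘ S))
    {A : Set Ω} (hA : MeasurableSet A) (hSA : S ⁻¹' A = A) :
    ∫ ω in A, μ[Y|F] ω ∂μ = ∫ ω in A, Y ω ∂μ := by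
  have hD : MemLp (Y - μ[Y|F]) 2 μ := hY.sub (hY.condExp one_le_two)
  have hSF' : @Measurable Ω Ω F F S := Measurable.of_comap_le hSF
  have hDF : μ[Y - μ[Y|F]|F] =ᵐ[μ] 0 := by
    filter_upwards [condExp_sub (hY.integrable one_le_two) (integrable_condExp (m := F) (f := Y))
        F,
      condExp_condExp_of_le (f := Y) (le_refl F) hF] with ω h1 h2
    simp [h1, h2]
  have hDS : ∀ j, 0 < j → StronglyMeasurable[F] fun ω => (Y - μ[Y|F]) (S^[j] ω) := by
    intro j hj
    obtain ⟨k, rfl⟩ : ∃ k, j = k + 1 := ⟨j - 1, by omega⟩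
    have hsplit : (fun ω => (Y - μ[Y|F]) (S^[k + 1] ω))
        = (Y ∘ S) ∘ S^[k] - μ[Y|F] ∘ S^[k + 1] := by
      funext ω; simp only [Pi.sub_apply, Function.comp_apply, Function.iterate_succ_apply']
    rw [hsplit]
    exact (hYS.comp_measurable (hSF'.iterate k)).sub
      (stronglyMeasurable_condExp.comp_measurable (hSF'.iterate (k + 1)))
  have horth : ∀ j, 0 < j →
      ∫ ω, (Y - μ[Y|F]) ω * (Y - μ[Y|F]) (S^[j] ω) ∂μ = 0 := fun j hj => by
    refine (integral_congr_ae (ae_of_all _ fun ω => mul_comm _ _)).trans ?_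
    exact integral_mul_eq_zero_of_condExp_eq_zero hF (hDS j hj)
      ((hD.comp_measurePreserving (hS.iterate j)).integrable_mul hD) (hD.integrable one_le_two) hDF
  have h := setIntegral_eq_zero_of_integral_mul_iterate_eq_zero hS hD horth hA hSA
  rw [Pi.sub_def, integral_sub (hY.integrable one_le_two).integrableOn
    integrable_condExp.integrableOn] at h
  exact (sub_eq_zero.1 h).symm

theorem condExp_condExp_of_shift_invariant (hF : F ≤ mΩ) (hI : I ≤ mΩ)
    (hS : MeasurePreserving S μ μ) (hSF : F.comap S ≤ F)
    (hIS : ∀ A, MeasurableSet[I] A → S ⁻¹' A = A)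
    {Y : Ω → ℝ} (hY : MemLp Y 2 μ) (hYS : StronglyMeasurable[F] (Y ∘ S)) :
    μ[μ[Y|F]|I] =ᵐ[μ] μ[Y|I] :=
  ae_eq_condExp_of_forall_setIntegral_eq hI (hY.integrable one_le_two)
    (fun _ _ _ => integrable_condExp.integrableOn)
    (fun A hA _ => by
      rw [setIntegral_condExp hI integrable_condExp hA]
      exact setIntegral_condExp_of_shift_invariant hF hS hSF hY hYS (hI A hA) (hIS A hA))
    stronglyMeasurable_condExp.aestronglyMeasurable

end Tower

section Covariance

open Matrix

variable {m : ℕ}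

lemma covMat_isHermitian (Q : Measure (Em m)) : (covMat Q).IsHermitian :=
  Matrix.IsHermitian.ext fun i j => by
    simp only [star_trivial]
    exact covariance_comm _ _

lemma dotProduct_covMat_mulVec {Q : Measure (Em m)} [IsFiniteMeasure Q]
    (hQ : ∀ i, MemLp (fun x : Em m => x i) 2 Q) (v : Fin m → ℝ) :
    v ⬝ᵥ covMat Q *ᵥ v = Var[fun x => ∑ i, v i * x i; Q] := by
  have hv : ∀ i, MemLp (fun x : Em m => v i * x i) 2 Q := fun i => (hQ i).const_mul (v i)
  rw [← covariance_self (memLp_finsetSum _ fun i _ => hv i).aemeasurable,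
    covariance_fun_sum_fun_sum hv hv]
  simp only [dotProduct, Matrix.mulVec, Finset.mul_sum, covariance_const_mul_left,
    covariance_const_mul_right]
  exact Finset.sum_congr rfl fun i _ => Finset.sum_congr rfl fun j _ => by
    change _ = _ * (_ * covMat Q i j); ring

theorem posDef_covMat_comp {β : Type*} [MeasurableSpace β] {μ : Measure β}
    [IsProbabilityMeasure μ] {κ : Kernel β (Em m)} [IsMarkovKernel κ]
    (hκ : ∀ᵐ b ∂μ, ∀ i, MemLp (fun x : Em m => x i) 2 (κ b))
    (hκμ : ∀ i, MemLp (fun x : Em m => x i) 2 (κ ∘ₘ μ))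
    (hPD : ∀ᵐ b ∂μ, (covMat (κ b)).PosDef) : (covMat (κ ∘ₘ μ)).PosDef := by
  refine Matrix.PosDef.of_dotProduct_mulVec_pos (covMat_isHermitian _) fun v hv => ?_
  rw [star_trivial, dotProduct_covMat_mulVec hκμ]
  refine (variance_nonneg _ _).lt_of_ne' fun hvar => ?_
  have hconst := Measure.ae_ae_of_ae_comp <| ae_eq_integral_of_variance_eq_zero
    (memLp_finsetSum _ fun i _ => (hκμ i).const_mul (v i)) hvar
  obtain ⟨b, hbPD, hbL, hbc⟩ := (hPD.and (hκ.and hconst)).exists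
  have hpos := hbPD.dotProduct_mulVec_pos hv
  rw [star_trivial, dotProduct_covMat_mulVec hbL, variance_congr hbc] at hpos
  simp [variance_eq_integral aemeasurable_const] at hpos

end Covariance

section Kernels

lemma ae_eq_of_forall_ae_apply_eq {α β : Type*} [MeasurableSpace α] [MeasurableSpace β]
    [StandardBorelSpace β] {μ : Measure α} {ν ρ : α → Measure β} [∀ a, IsFiniteMeasure (ν a)]
    (h : ∀ s, MeasurableSet s → ∀ᵐ a ∂μ, ν a s = ρ a s) : ∀ᵐ a ∂μ, ν a = ρ a := by
  set f := embeddingReal β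
  have hf := measurableEmbedding_embeddingReal β
  -- the sets `f ⁻¹' Iic q`, `q : ℚ`, are a countable generating π-system
  have hIic : ∀ᵐ a ∂μ, ∀ q : ℚ, ν a (f ⁻¹' Set.Iic (q : ℝ)) = ρ a (f ⁻¹' Set.Iic (q : ℝ)) :=
    ae_all_iff.2 fun q => h _ (hf.measurable measurableSet_Iic)
  filter_upwards [hIic, h _ MeasurableSet.univ] with a ha huniv
  refine ext_of_generate_finite _ ?_ (Real.isPiSystem_Iic_rat.comap f) ?_ huniv
  · rw [← hf.comap_eq, BorelSpace.measurable_eq (α := ℝ), Real.borel_eq_generateFrom_Iic_rat,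
      MeasurableSpace.comap_generateFrom]
    rfl
  · rintro _ ⟨_, ht, rfl⟩
    simp only [Set.mem_iUnion, Set.mem_singleton_iff] at ht
    obtain ⟨q, rfl⟩ := ht
    exact ha q

variable {Ω : Type*} {F I : MeasurableSpace Ω} [mΩ : MeasurableSpace Ω] [StandardBorelSpace Ω]
  {μ : Measure Ω} [IsFiniteMeasure μ]

lemma ae_ae_condExpKernel_of_ae (hI : I ≤ mΩ) {p : Ω → Prop} (h : ∀ᵐ ω ∂μ, p ω) :
    ∀ᵐ ω ∂μ, ∀ᵐ η ∂condExpKernel μ I ω, p η := by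
  rw [← condExpKernel_comp_trim (μ := μ) hI] at h
  exact ae_of_ae_trim hI (Measure.ae_ae_of_ae_comp h)

lemma condExpKernel_apply_ae_eq_lintegral (hF : F ≤ mΩ) (hI : I ≤ mΩ) {s : Set Ω}
    (hs : MeasurableSet s) (htower : μ[μ⟦s|F⟧|I] =ᵐ[μ] μ⟦s|I⟧) :
    ∀ᵐ ω ∂μ, condExpKernel μ I ω s = ∫⁻ η, condExpKernel μ F η s ∂condExpKernel μ I ω := by
  have hFI : μ[μ⟦s|F⟧|I]
      =ᵐ[μ] fun ω => ∫ η, (condExpKernel μ F η).real s ∂condExpKernel μ I ω :=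
    (condExp_congr_ae (condExpKernel_ae_eq_condExp hF hs).symm).trans
      (condExp_ae_eq_integral_condExpKernel hI (integrable_toReal_condExpKernel hs))
  filter_upwards [condExpKernel_ae_eq_condExp hI hs, htower, hFI] with ω h1 h2 h3
  have hreal := h1.trans (h2.symm.trans h3)
  simp_rw [measureReal_def] at hreal
  rw [integral_toReal ((measurable_condExpKernel hs).mono hF le_rfl).aemeasurable
    (ae_of_all _ fun η => measure_lt_top _ _)] at hreal
  refine (ENNReal.toReal_eq_toReal_iff' (measure_ne_top _ _) ?_).1 hreal
  refine ne_top_of_le_ne_top ENNReal.one_ne_top ?_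
  calc ∫⁻ η, condExpKernel μ F η s ∂condExpKernel μ I ω
      ≤ ∫⁻ _, 1 ∂condExpKernel μ I ω := lintegral_mono fun η => prob_le_one
    _ = 1 := by simp

end Kernels

section Shift

open scoped ENNReal

variable {Ω : Type*} [MeasurableSpace Ω] {m : ℕ}

lemma invSigma_le (T : Ω → Ω) : invSigma T ≤ ‹MeasurableSpace Ω› := fun _ hs => hs.1

lemma preimage_eq_of_measurableSet_invSigma {T Tinv : Ω → Ω}
    (hinv : Function.RightInverse Tinv T) {A : Set Ω} (hA : MeasurableSet[invSigma T] A) :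
    Tinv ⁻¹' A = A := by
  conv_lhs => rw [← hA.2]
  rw [← Set.preimage_comp, hinv.comp_eq_id, Set.preimage_id]

lemma measurable_sigmaPast (X : ℤ → Ω → Em m) {k : ℤ} (hk : k ≤ 0) :
    Measurable[sigmaPast X] (X k) :=
  Measurable.of_comap_le (le_iSup₂_of_le k hk le_rfl)

lemma sigmaPast_le {X : ℤ → Ω → Em m} (hX : ∀ n, Measurable (X n)) :
    sigmaPast X ≤ ‹MeasurableSpace Ω› :=
  iSup₂_le fun k _ => (hX k).comap_le

lemma comap_sigmaPast_le {X : ℤ → Ω → Em m} {S : Ω → Ω}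
    (hXS : ∀ n ω, X n (S ω) = X (n - 1) ω) : (sigmaPast X).comap S ≤ sigmaPast X := by
  simp_rw [sigmaPast, MeasurableSpace.comap_iSup, MeasurableSpace.comap_comp]
  refine iSup₂_le fun k hk => ?_
  have hcomp : X k ∘ S = X (k - 1) := funext (hXS k)
  rw [hcomp]
  exact (measurable_sigmaPast X (by omega)).comap_le

lemma memLp_apply_map_of_norm_le {ν : Measure Ω} [IsFiniteMeasure ν] {Z : Ω → Em m}
    (hZ : Measurable Z) {M : ℝ} (hM : ∀ ω, ‖Z ω‖ ≤ M) (p : ℝ≥0∞) (i : Fin m) :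
    MemLp (fun x : Em m => x i) p (ν.map Z) := by
  rw [memLp_map_measure_iff (by fun_prop) hZ.aemeasurable]
  exact MemLp.of_bound (by fun_prop) M
    (ae_of_all _ fun ω => (PiLp.norm_apply_le (Z ω) i).trans (hM ω))

end Shift

section PastLaw

variable {Ω : Type*} [MeasurableSpace Ω] [StandardBorelSpace Ω] {m : ℕ}

/-- `ℙ(X 1 ∈ · | sigmaPast X)`; the `comap id` makes it a kernel out of the full σ-algebra of
`Ω`, so that it can be mixed against `condExpKernel P (invSigma T) ω`. -/
def pastLawKernel (P : Measure Ω) [IsFiniteMeasure P] (X : ℤ → Ω → Em m)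
    (hX : ∀ n, Measurable (X n)) : Kernel Ω (Em m) :=
  ((condExpKernel P (sigmaPast X)).comap id (measurable_id'' (sigmaPast_le hX))).map (X 1)

section Finite

variable {P : Measure Ω} [IsFiniteMeasure P] {X : ℤ → Ω → Em m} {hX : ∀ n, Measurable (X n)}

lemma pastLawKernel_apply (η : Ω) :
    pastLawKernel P X hX η = (condExpKernel P (sigmaPast X) η).map (X 1) := by
  simp [pastLawKernel, Kernel.map_apply _ (hX 1)]

instance : IsMarkovKernel (pastLawKernel P X hX) := Kernel.IsMarkovKernel.map _ (hX 1)

end Finite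

theorem ae_map_condExpKernel_invSigma_eq_comp {P : Measure Ω} [IsProbabilityMeasure P]
    {X : ℤ → Ω → Em m} (hX : ∀ n, Measurable (X n)) {T Tinv : Ω → Ω}
    (hTinv : MeasurePreserving Tinv P P) (hinv : Function.RightInverse Tinv T)
    (hXS : ∀ n ω, X n (Tinv ω) = X (n - 1) ω) :
    ∀ᵐ ω ∂P, (condExpKernel P (invSigma T) ω).map (X 1)
      = pastLawKernel P X hX ∘ₘ condExpKernel P (invSigma T) ω := by
  have hF := sigmaPast_le hX
  have hI := invSigma_le T
  have : ∀ ω, IsFiniteMeasure ((condExpKernel P (invSigma T) ω).map (X 1)) :=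
    fun _ => inferInstance
  refine ae_eq_of_forall_ae_apply_eq fun B hB => ?_
  have hYS : (X 1 ⁻¹' B).indicator (fun _ => (1 : ℝ)) ∘ Tinv
      = (X 0 ⁻¹' B).indicator fun _ => 1 := by
    have h10 : X 1 ∘ Tinv = X 0 := funext fun ω => by simpa using hXS 1 ω
    rw [← h10]
    rfl
  have htower := condExp_condExp_of_shift_invariant hF hI hTinv
    (comap_sigmaPast_le hXS) (fun A hA => preimage_eq_of_measurableSet_invSigma hinv hA)
    (memLp_indicator_const 2 (hX 1 hB) (1 : ℝ) (Or.inr (measure_ne_top _ _)))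
    (hYS ▸ stronglyMeasurable_const.indicator (measurable_sigmaPast X le_rfl hB))
  filter_upwards [condExpKernel_apply_ae_eq_lintegral hF hI (hX 1 hB) htower] with ω hω
  rw [Measure.map_apply (hX 1) hB, Measure.bind_apply hB (Kernel.measurable _).aemeasurable, hω]
  simp_rw [pastLawKernel_apply, Measure.map_apply (hX 1) hB]

end PastLaw

theorem limit_empirical_distribution_posDef_covariance_general
    (m : ℕ) (M : ℝ)
    {Ω : Type*} [MeasurableSpace Ω] [StandardBorelSpace Ω]
    (P : Measure Ω) [IsProbabilityMeasure P]
    (T Tinv : Ω → Ω) (hTinv : MeasurePreserving Tinv P P)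
    (hinv₂ : Function.RightInverse Tinv T)
    (X : ℤ → Ω → Em m) (hXmeas : ∀ n, Measurable (X n))
    (hXmem : ∀ n ω, X n ω ∈ mkt m M)
    (hshift : ∀ (n : ℤ) ω, X (n + 1) ω = X n (T ω))
    (hPD : ∀ᵐ ω ∂P,
      (covMat (Measure.map (X 1) (condExpKernel P (sigmaPast X) ω))).PosDef) :
    ∀ᵐ ω ∂P,
      (covMat (Measure.map (X 1) (condExpKernel P (invSigma T) ω))).PosDef := by
  have hXS : ∀ n ω, X n (Tinv ω) = X (n - 1) ω := fun n ω => by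
    simpa [hinv₂ ω] using hshift (n - 1) (Tinv ω)
  have hL : ∀ (ν : Measure Ω) [IsFiniteMeasure ν] i,
      MemLp (fun x : Em m => x i) 2 (ν.map (X 1)) := fun ν _ =>
    memLp_apply_map_of_norm_le (hXmeas 1) (fun ω => (hXmem 1 ω).2) 2
  filter_upwards [ae_map_condExpKernel_invSigma_eq_comp hXmeas hTinv hinv₂ hXS,
    ae_ae_condExpKernel_of_ae (invSigma_le T) hPD] with ω hmix hPDpast
  rw [hmix]
  refine posDef_covMat_comp (ae_of_all _ fun η => ?_) (hmix ▸ hL _)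
    (hPDpast.mono fun η h => by rwa [pastLawKernel_apply])
  rw [pastLawKernel_apply]
  exact hL _

/-- For a stationary process extended to a two-sided stationary process with
invertible measure-preserving shift `T` and invariant σ-field `𝓘`, if the regular
conditional distribution `ℙ(X_1 ∈ · | σ(X_{−∞}^0))` has a.s. positive definite covariance
matrix, then so does `P_∞ = ℙ(X_1 ∈ · | 𝓘)`. -/
theorem limit_empirical_distribution_posDef_covariance
    (m : ℕ) (hm : 2 ≤ m) (M : ℝ) (hM : 0 < M)
    {Ω : Type*} [MeasurableSpace Ω] [StandardBorelSpace Ω] [Nonempty Ω]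
    (P : Measure Ω) [IsProbabilityMeasure P]
    (T Tinv : Ω → Ω) (hT : MeasurePreserving T P P) (hTinv : MeasurePreserving Tinv P P)
    (hinv₁ : Function.LeftInverse Tinv T) (hinv₂ : Function.RightInverse Tinv T)
    (X : ℤ → Ω → Em m) (hXmeas : ∀ n, Measurable (X n))
    (hXmem : ∀ n ω, X n ω ∈ mkt m M)
    (hshift : ∀ (n : ℤ) ω, X (n + 1) ω = X n (T ω))
    (hPD : ∀ᵐ ω ∂P,
      (covMat (Measure.map (X 1) (condExpKernel P (sigmaPast X) ω))).PosDef) :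
    ∀ᵐ ω ∂P,
      (covMat (Measure.map (X 1) (condExpKernel P (invSigma T) ω))).PosDef :=
  limit_empirical_distribution_posDef_covariance_general m M P T Tinv hTinv hinv₂ X hXmeas hXmem
    hshift hPD
end
end
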